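/- arXiv:2001.00763 — 3 statements merged into one kernel-verified Lean document; each statement's English description precedes it below -/
import Mathlib

section
/- Let G be a graph on n ≥ 3 vertices and for each vertex v of G let G_v denote the induced subgraph of G on the remaining n−1 vertices. Then ν*(G) ≥ (1/(n−2))·Σ_v ν*(G_v). Equivalently, with η(H) := ν*(H)/(|H|·(|H|−1)), one has η(G) ≥ (1/n)·Σ_v η(G_v). -/
open Finset
open scoped Classical

variable {V : Type*}

/-- A triangle packing of `G`: a finite collection of triangles (3-cliques) of `G` that are
pairwise edge-disjoint (i.e. any two distinct members share at most one vertex). -/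
def SimpleGraph.IsTrianglePacking [DecidableEq V] (G : SimpleGraph V)
    (P : Finset (Finset V)) : Prop :=
  (∀ T ∈ P, G.IsNClique 3 T) ∧
    (P : Set (Finset V)).Pairwise fun S T => (S ∩ T).card ≤ 1

/-- The maximum size (number of edges, i.e. `3 * number of triangles`) of a triangle packing. -/
noncomputable def SimpleGraph.triangleNu [DecidableEq V] (G : SimpleGraph V) : ℕ :=
  sSup {m | ∃ P : Finset (Finset V), G.IsTrianglePacking P ∧ m = 3 * P.card}

/-- A fractional triangle packing of `G`: a weight function on triples of vertices, supported
on triangles of `G`, with values in `[0,1]`, such that every edge carries total weight ≤ 1. -/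
def SimpleGraph.IsFracTrianglePacking [Fintype V] [DecidableEq V] (G : SimpleGraph V)
    (w : Finset V → ℝ) : Prop :=
  (∀ T, 0 ≤ w T ∧ w T ≤ 1) ∧
  (∀ T, ¬ G.IsNClique 3 T → w T = 0) ∧
  ∀ u v : V, G.Adj u v →
    ∑ T ∈ univ.filter (fun T : Finset V => G.IsNClique 3 T ∧ u ∈ T ∧ v ∈ T), w T ≤ 1

/-- `ν*(G)`: the maximum size `3 ∑ w(T)` of a fractional triangle packing of `G`. -/
noncomputable def SimpleGraph.nuStar [Fintype V] [DecidableEq V] (G : SimpleGraph V) : ℝ :=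
  sSup {x | ∃ w : Finset V → ℝ, G.IsFracTrianglePacking w ∧ x = 3 * ∑ T : Finset V, w T}

/-- `η(G) = ν*(G)/(n(n-1))` where `n = |V(G)|`. -/
noncomputable def SimpleGraph.etaPack [Fintype V] [DecidableEq V] (G : SimpleGraph V) : ℝ :=
  G.nuStar / ((Fintype.card V : ℝ) * ((Fintype.card V : ℝ) - 1))

/-- A fractional triangle decomposition: a fractional packing with equality on every edge. -/
def SimpleGraph.IsFracTriangleDecomposition [Fintype V] [DecidableEq V] (G : SimpleGraph V)
    (w : Finset V → ℝ) : Prop :=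
  G.IsFracTrianglePacking w ∧
  ∀ u v : V, G.Adj u v →
    ∑ T ∈ univ.filter (fun T : Finset V => G.IsNClique 3 T ∧ u ∈ T ∧ v ∈ T), w T = 1

/-- `G` is `ε`-far from bipartite: every bipartite subgraph misses at least `ε n²` edges. -/
def FarFromBipartite [Fintype V] [DecidableEq V] (ε : ℝ) (G : SimpleGraph V) : Prop :=
  ∀ H : SimpleGraph V, H ≤ G → H.Colorable 2 →
    ε * (Fintype.card V : ℝ) ^ 2 ≤ (G.edgeFinset.card : ℝ) - (H.edgeFinset.card : ℝ)

/-- The disjoint union of two cliques on `⌈n/2⌉`-ish halves of `Fin n`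
(the first `n/2` vertices form one clique, the rest form the other). -/
def twoCliques (n : ℕ) : SimpleGraph (Fin n) where
  Adj u v := u ≠ v ∧ ((u : ℕ) < n / 2 ↔ (v : ℕ) < n / 2)
  symm := by constructor; intro u v h; exact ⟨h.1.symm, h.2.symm⟩
  loopless := by constructor; intro u h; exact h.1 rfl

/-- `g(n)`: minimum over co-triangle-free `n`-vertex graphs of the max triangle packing size. -/
noncomputable def gInt (n : ℕ) : ℕ :=
  sInf {m | ∃ G : SimpleGraph (Fin n), Gᶜ.CliqueFree 3 ∧ m = G.triangleNu}

/-- `g*(n)`: minimum over co-triangle-free `n`-vertex graphs of `ν*`. -/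
noncomputable def gStar (n : ℕ) : ℝ :=
  sInf {x | ∃ G : SimpleGraph (Fin n), Gᶜ.CliqueFree 3 ∧ x = G.nuStar}


/-!
Near-optimal fractional packings `w_v` of the vertex-deleted subgraphs `G - v`, extended by zero,
are packings of `G` vanishing on every triangle through `v`. An edge `uu'` is therefore loaded
only by the `n - 2` packings with `v ∉ {u, u'}`, each contributing at most `1`, so
`(∑_v w_v) / (n - 2)` is a fractional triangle packing of `G` whose size is
`(∑_v ν*(G - v)) / (n - 2)` up to an arbitrarily small error.
-/

theorem Fintype.sum_csSup_le {ι : Type*} [Fintype ι] {S : ι → Set ℝ} (hS : ∀ i, (S i).Nonempty)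
    {c : ℝ} (h : ∀ x : ι → ℝ, (∀ i, x i ∈ S i) → ∑ i, x i ≤ c) : ∑ i, sSup (S i) ≤ c := by
  refine le_of_forall_pos_le_add fun ε hε => ?_
  set δ := ε / (Fintype.card ι + 1)
  have hδ : 0 < δ := by positivity
  choose x hxS hx using fun i => exists_lt_of_lt_csSup (hS i) (sub_lt_self (sSup (S i)) hδ)
  calc ∑ i, sSup (S i) ≤ ∑ i, (x i + δ) := sum_le_sum fun i _ => by linarith [hx i]
    _ = ∑ i, x i + Fintype.card ι * δ := by rw [sum_add_distrib, sum_const, card_univ, nsmul_eq_mul]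
    _ ≤ c + ε := by
      gcongr
      · exact h x hxS
      · rw [mul_div_assoc', div_le_iff₀ (by positivity)]
        linarith

section Lift

variable {V : Type*} {s : Set V}

noncomputable def liftWeight (s : Set V) (w : Finset s → ℝ) : Finset V → ℝ :=
  Function.extend (Finset.map (Function.Embedding.subtype (· ∈ s))) w 0

theorem liftWeight_map (w : Finset s → ℝ) (T : Finset s) :
    liftWeight s w (T.map (Function.Embedding.subtype _)) = w T :=
  (Finset.map_injective _).extend_apply _ _ _

theorem exists_map_eq_or_liftWeight_eq_zero (w : Finset s → ℝ) (T : Finset V) :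
    (∃ T' : Finset s, T'.map (Function.Embedding.subtype _) = T) ∨ liftWeight s w T = 0 :=
  or_iff_not_imp_left.2 fun h => Function.extend_apply' _ _ _ h

theorem liftWeight_eq_zero_of_not_subset (w : Finset s → ℝ) {T : Finset V}
    (hT : ¬ (T : Set V) ⊆ s) : liftWeight s w T = 0 := by
  refine (exists_map_eq_or_liftWeight_eq_zero w T).resolve_left ?_
  rintro ⟨T', rfl⟩
  exact hT (by simp)

theorem sum_liftWeight (w : Finset s → ℝ) (A : Finset (Finset V)) :
    ∑ T ∈ A, liftWeight s w T =
      ∑ T' ∈ A.preimage _ (Finset.map_injective (Function.Embedding.subtype (· ∈ s))).injOn,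
        w T' := by
  calc ∑ T ∈ A, liftWeight s w T
      = ∑ T' ∈ A.preimage _ (Finset.map_injective _).injOn,
          liftWeight s w (T'.map (Function.Embedding.subtype _)) :=
        (sum_preimage _ A _ _ fun T _ hT =>
          (exists_map_eq_or_liftWeight_eq_zero w T).resolve_left hT).symm
    _ = _ := sum_congr rfl fun T' _ => liftWeight_map w T'

theorem sum_liftWeight_univ [Fintype V] [Fintype s] (w : Finset s → ℝ) :
    ∑ T, liftWeight s w T = ∑ T', w T' := by
  rw [sum_liftWeight, preimage_univ]

end Lift

namespace SimpleGraph

variable {V : Type*} [Fintype V] [DecidableEq V] {G : SimpleGraph V}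

noncomputable def trianglesThrough (G : SimpleGraph V) (u v : V) : Finset (Finset V) :=
  univ.filter fun T => G.IsNClique 3 T ∧ u ∈ T ∧ v ∈ T

theorem isFracTrianglePacking_zero (G : SimpleGraph V) : G.IsFracTrianglePacking 0 :=
  ⟨fun _ => ⟨le_rfl, zero_le_one⟩, fun _ _ => rfl, fun _ _ _ => by simp⟩

theorem nuStar_set_bddAbove (G : SimpleGraph V) :
    BddAbove {x | ∃ w : Finset V → ℝ, G.IsFracTrianglePacking w ∧ x = 3 * ∑ T : Finset V, w T} := by
  refine ⟨3 * Fintype.card (Finset V), ?_⟩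
  rintro x ⟨w, hw, rfl⟩
  have : ∑ T, w T ≤ Fintype.card (Finset V) := by
    simpa using sum_le_sum fun T (_ : T ∈ univ) => (hw.1 T).2
  linarith

theorem IsFracTrianglePacking.le_nuStar {w : Finset V → ℝ} (hw : G.IsFracTrianglePacking w) :
    3 * ∑ T, w T ≤ G.nuStar :=
  le_csSup G.nuStar_set_bddAbove ⟨w, hw, rfl⟩

theorem isFracTrianglePacking_of_load_le_one {w : Finset V → ℝ} (hnonneg : ∀ T, 0 ≤ w T)
    (hsupp : ∀ T, ¬ G.IsNClique 3 T → w T = 0)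
    (hload : ∀ u v, G.Adj u v → ∑ T ∈ G.trianglesThrough u v, w T ≤ 1) :
    G.IsFracTrianglePacking w := by
  refine ⟨fun T => ⟨hnonneg T, ?_⟩, hsupp, hload⟩
  by_cases hT : G.IsNClique 3 T
  · obtain ⟨u, hu, v, hv, huv⟩ := one_lt_card.1 (hT.card_eq ▸ by norm_num : 1 < #T)
    calc w T ≤ ∑ T ∈ G.trianglesThrough u v, w T :=
          single_le_sum (fun T _ => hnonneg T) (by simp [trianglesThrough, hT, hu, hv])
      _ ≤ 1 := hload u v (hT.1 hu hv huv)
  · rw [hsupp T hT]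
    exact zero_le_one

theorem IsFracTrianglePacking.liftWeight {s : Set V} [Fintype s] {w : Finset s → ℝ}
    (hw : (G.induce s).IsFracTrianglePacking w) : G.IsFracTrianglePacking (liftWeight s w) := by
  refine isFracTrianglePacking_of_load_le_one (fun T => ?_) (fun T hT => ?_) fun u v huv => ?_
  · rcases exists_map_eq_or_liftWeight_eq_zero w T with ⟨T', rfl⟩ | h
    · exact liftWeight_map w T' ▸ (hw.1 T').1
    · exact h.ge
  · rcases exists_map_eq_or_liftWeight_eq_zero w T with ⟨T', rfl⟩ | h
    · rw [liftWeight_map]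
      exact hw.2.1 T' (by rwa [isNClique_induce_iff])
    · exact h
  by_cases hs : u ∈ s ∧ v ∈ s
  · have : (G.trianglesThrough u v).preimage _
        (Finset.map_injective (Function.Embedding.subtype (· ∈ s))).injOn =
        (G.induce s).trianglesThrough ⟨u, hs.1⟩ ⟨v, hs.2⟩ := by
      ext T'
      simp [trianglesThrough, isNClique_induce_iff, hs.1, hs.2]
    rw [sum_liftWeight, this]
    exact hw.2.2 _ _ huv
  · refine (sum_eq_zero fun T hT => liftWeight_eq_zero_of_not_subset w fun hTs => hs ?_).trans_le
      zero_le_one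
    simp only [trianglesThrough, mem_filter] at hT
    exact ⟨hTs hT.2.2.1, hTs hT.2.2.2⟩

theorem isFracTrianglePacking_average (hn : 3 ≤ Fintype.card V) {w : V → Finset V → ℝ}
    (hw : ∀ v, G.IsFracTrianglePacking (w v)) (hvanish : ∀ v T, v ∈ T → w v T = 0) :
    G.IsFracTrianglePacking fun T => (∑ v, w v T) / (Fintype.card V - 2) := by
  have hn' : (0 : ℝ) < Fintype.card V - 2 := by
    have : (3 : ℝ) ≤ Fintype.card V := by exact_mod_cast hn
    linarith
  refine isFracTrianglePacking_of_load_le_one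
    (fun T => div_nonneg (sum_nonneg fun v _ => ((hw v).1 T).1) hn'.le)
    (fun T hT => by simp [fun v => (hw v).2.1 T hT]) fun u u' huu' => ?_
  rw [← sum_div, sum_comm, div_le_one hn']
  have hload_endpoint : ∀ v ∉ univ \ {u, u'}, ∑ T ∈ G.trianglesThrough u u', w v T = 0 := by
    intro v hv
    refine sum_eq_zero fun T hT => hvanish v T ?_
    simp only [trianglesThrough, mem_filter] at hT
    simp only [mem_sdiff, mem_univ, true_and, not_not, mem_insert, mem_singleton] at hv
    rcases hv with rfl | rfl
    exacts [hT.2.2.1, hT.2.2.2]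
  calc ∑ v, ∑ T ∈ G.trianglesThrough u u', w v T
      = ∑ v ∈ univ \ {u, u'}, ∑ T ∈ G.trianglesThrough u u', w v T :=
        (sum_subset (subset_univ _) fun v _ hv => hload_endpoint v hv).symm
    _ ≤ ∑ _v ∈ univ \ {u, u'}, (1 : ℝ) := sum_le_sum fun v _ => (hw v).2.2 u u' huu'
    _ = Fintype.card V - 2 := by
      rw [sum_const, nsmul_one, card_sdiff_of_subset (subset_univ _), card_pair huu'.ne,
        card_univ, Nat.cast_sub (by omega), Nat.cast_two]

theorem sum_nuStar_induce_compl_le (G : SimpleGraph V) (hn : 3 ≤ Fintype.card V) :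
    ∑ v, (G.induce ({v}ᶜ : Set V)).nuStar ≤ (Fintype.card V - 2) * G.nuStar := by
  refine Fintype.sum_csSup_le (fun v => ?_) fun x hx => ?_
  · exact ⟨_, 0, isFracTrianglePacking_zero _, rfl⟩
  choose w hw hxw using hx
  set W := fun v => liftWeight ({v}ᶜ : Set V) (w v)
  have hW := isFracTrianglePacking_average hn (w := W) (fun v => (hw v).liftWeight)
    fun v T hv => liftWeight_eq_zero_of_not_subset _ fun h => h hv rfl
  have hn' : (0 : ℝ) < Fintype.card V - 2 := by
    have : (3 : ℝ) ≤ Fintype.card V := by exact_mod_cast hn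
    linarith
  calc ∑ v, x v = ∑ v, 3 * ∑ T, W v T := by simp only [hxw, W, sum_liftWeight_univ]
    _ = (Fintype.card V - 2) * (3 * ∑ T, (∑ v, W v T) / (Fintype.card V - 2)) := by
      rw [← sum_div, sum_comm, ← mul_sum]
      field_simp
    _ ≤ _ := mul_le_mul_of_nonneg_left hW.le_nuStar hn'.le

theorem card_compl_singleton (v : V) :
    (Fintype.card ({v}ᶜ : Set V) : ℝ) = Fintype.card V - 1 := by
  rw [Fintype.card_compl_set, Set.card_singleton, Nat.cast_sub (Fintype.card_pos_iff.2 ⟨v⟩),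
    Nat.cast_one]

end SimpleGraph

/-- averaging: `ν*(G) ≥ (1/(n-2)) ∑_v ν*(G_v)`; equivalently
`η(G) ≥ (1/n) ∑_v η(G_v)`. -/
theorem stmt4 {V : Type*} [Fintype V] [DecidableEq V] (G : SimpleGraph V)
    (hn : 3 ≤ Fintype.card V) :
    (1 / ((Fintype.card V : ℝ) - 2)) *
        ∑ v : V, (G.induce ({v}ᶜ : Set V)).nuStar ≤ G.nuStar ∧
    (1 / (Fintype.card V : ℝ)) *
        ∑ v : V, (G.induce ({v}ᶜ : Set V)).etaPack ≤ G.etaPack := by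
  have hn' : (3 : ℝ) ≤ Fintype.card V := by exact_mod_cast hn
  have hnu : 1 / ((Fintype.card V : ℝ) - 2) * ∑ v : V, (G.induce ({v}ᶜ : Set V)).nuStar ≤
      G.nuStar := by
    rw [one_div_mul_eq_div, div_le_iff₀ (by linarith), mul_comm]
    exact G.sum_nuStar_induce_compl_le hn
  refine ⟨hnu, ?_⟩
  calc 1 / (Fintype.card V : ℝ) * ∑ v : V, (G.induce ({v}ᶜ : Set V)).etaPack
      = (1 / ((Fintype.card V : ℝ) - 2) * ∑ v : V, (G.induce ({v}ᶜ : Set V)).nuStar) /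
          (Fintype.card V * (Fintype.card V - 1)) := by
        simp only [SimpleGraph.etaPack, SimpleGraph.card_compl_singleton, ← sum_div]
        field_simp
        ring
    _ ≤ G.etaPack := div_le_div_of_nonneg_right hnu (by nlinarith)
end

section
/- For all integers n ≥ 7 and 0 ≤ k ≤ ⌊n/2⌋, the graph obtained from the complete graph K_n by removing a matching of k edges admits a fractional triangle decomposition. -/
open Finset
open scoped Classical

variable {V : Type*}

/-!
Give a triangle `T` of `K_n - M` a weight `f (t)` depending only on the number `t` of its
vertices covered by the matching. If `m` vertices are left uncovered and the edge `uv` has `t`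
covered ends, its triangles are `uvx` for `x` outside `{u, v}` and the partners of `u` and `v`;
among these `n - m - 2t` have `x` covered and `m - 2 + t` have `x` uncovered. So the
decomposition condition is the recurrence `(n - m - 2t) f (t + 1) + (m - 2 + t) f (t) = 1`
for `t ≤ 2`, `m + t ≥ 2`, which has a nonnegative solution once `n ≥ 7`. The bound `w ≤ 1` is
then automatic, since each triangle is one summand of the sum over one of its edges.
-/

theorem Finset.sum_comp_add_of_le_one {ι : Type*} (s : Finset ι) {d : ι → ℕ}
    (hd : ∀ i, d i ≤ 1) (g : ℕ → ℝ) (t : ℕ) :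
    ∑ i ∈ s, g (t + d i) =
      (∑ i ∈ s, (d i : ℝ)) * g (t + 1) + (∑ i ∈ s, (1 - (d i : ℝ))) * g t := by
  rw [sum_mul, sum_mul, ← sum_add_distrib]
  refine sum_congr rfl fun i _ => ?_
  rcases Nat.le_one_iff_eq_zero_or_eq_one.1 (hd i) with h | h <;> simp [h]

/-- The weight of a triangle with `t` covered vertices in `K_n` minus a matching that leaves `m`
vertices uncovered. For `m ≤ 2` the lowest admissible `t = 2 - m` forces
`f (3 - m) = 1 / (n + m - 4)` and the recurrence is solved upwards; for `m ≥ 3` we choose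
`f 2 = f 3 = 1 / (n - 4)` and solve downwards. -/
noncomputable def matchingTriangleWeight (n : ℝ) : ℕ → ℕ → ℝ
  | 0, 3 => 1 / (n - 4)
  | 1, 2 => 1 / (n - 3)
  | 1, 3 => (n - 4) / ((n - 3) * (n - 5))
  | 2, 1 => 1 / (n - 2)
  | 2, 2 => (n - 3) / ((n - 2) * (n - 4))
  | 2, 3 => (n ^ 2 - 8 * n + 14) / ((n - 2) * (n - 4) * (n - 6))
  | m + 3, 0 => (n - 5 + m ^ 2) / ((m + 1) * (m + 2) * (n - 4))
  | m + 3, 1 => (m + 1) / ((m + 2) * (n - 4))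
  | _ + 3, 2 | _ + 3, 3 => 1 / (n - 4)
  | _, _ => 0

theorem matchingTriangleWeight_nonneg {n : ℝ} (hn : 6 < n) (m t : ℕ) :
    0 ≤ matchingTriangleWeight n m t := by
  have : 0 < n - 2 := by linarith
  have : 0 < n - 3 := by linarith
  have : 0 < n - 4 := by linarith
  have : 0 < n - 5 := by linarith
  have : 0 < n - 6 := by linarith
  have : 0 < n ^ 2 - 8 * n + 14 := by nlinarith
  unfold matchingTriangleWeight
  split <;> first | rfl | positivity

theorem matchingTriangleWeight_recurrence {n : ℝ} (hn : 6 < n) {m t : ℕ} (ht : t ≤ 2)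
    (hmt : 2 ≤ m + t) :
    (n - m - 2 * t) * matchingTriangleWeight n m (t + 1) +
      (m - 2 + t) * matchingTriangleWeight n m t = 1 := by
  have : n - 2 ≠ 0 := by linarith
  have : n - 3 ≠ 0 := by linarith
  have : n - 4 ≠ 0 := by linarith
  have : n - 5 ≠ 0 := by linarith
  have : n - 6 ≠ 0 := by linarith
  match m, t with
  | 0, 2 | 1, 1 | 1, 2 | 2, 0 | 2, 1 | 2, 2 =>
    simp only [matchingTriangleWeight]; push_cast; field_simp; ring
  | m + 3, 0 | m + 3, 1 | m + 3, 2 =>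
    simp only [matchingTriangleWeight]; push_cast; field_simp; ring

namespace SimpleGraph

variable {V : Type*} [Fintype V] {M : SimpleGraph V} {u v : V}

theorem degree_eq_one_of_adj (hM : ∀ v, M.degree v ≤ 1) (h : M.Adj u v) : M.degree v = 1 :=
  le_antisymm (hM v) ((M.degree_pos_iff_exists_adj v).2 ⟨u, h.symm⟩)

theorem disjoint_neighborFinset (hM : ∀ v, M.degree v ≤ 1) (huv : u ≠ v) :
    Disjoint (M.neighborFinset u) (M.neighborFinset v) := by
  refine Finset.disjoint_left.2 fun x hxu hxv => huv ?_
  exact card_le_one.1 (hM x) u (by simpa [adj_comm] using hxu) v (by simpa [adj_comm] using hxv)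

variable [DecidableEq V]

theorem isFracTriangleDecomposition_of_nonneg {G : SimpleGraph V} {w : Finset V → ℝ}
    (hw : ∀ T, 0 ≤ w T) (hsupp : ∀ T, ¬ G.IsNClique 3 T → w T = 0)
    (hsum : ∀ u v, G.Adj u v →
      ∑ T ∈ univ.filter (fun T : Finset V => G.IsNClique 3 T ∧ u ∈ T ∧ v ∈ T), w T = 1) :
    G.IsFracTriangleDecomposition w := by
  refine ⟨⟨fun T => ⟨hw T, ?_⟩, hsupp, fun u v huv => (hsum u v huv).le⟩, hsum⟩
  by_cases hT : G.IsNClique 3 T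
  · obtain ⟨a, b, c, hab, -, -, rfl⟩ := is3Clique_iff.1 hT
    rw [← hsum a b hab]
    exact single_le_sum (fun T _ => hw T) (by simp [hT])
  · simp [hsupp T hT]

theorem sum_isNClique_three_mem_eq_sum (G : SimpleGraph V) [DecidableRel G.Adj] {u v : V}
    [DecidablePred fun T : Finset V => G.IsNClique 3 T ∧ u ∈ T ∧ v ∈ T] (huv : G.Adj u v)
    (F : Finset V → ℝ) :
    ∑ T ∈ univ.filter (fun T : Finset V => G.IsNClique 3 T ∧ u ∈ T ∧ v ∈ T), F T =
      ∑ x ∈ univ.filter (fun x => G.Adj u x ∧ G.Adj v x), F {u, v, x} := by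
  symm
  refine sum_bij (fun x _ => {u, v, x}) ?_ ?_ ?_ (fun _ _ => rfl)
  · intro x hx
    simp only [mem_filter, mem_univ, true_and] at hx ⊢
    exact ⟨is3Clique_triple_iff.2 ⟨huv, hx⟩, by simp, by simp⟩
  · intro x hx y hy hxy
    simp only [mem_filter, mem_univ, true_and] at hx hy
    have : x ∈ ({u, v, y} : Finset V) := hxy ▸ by simp
    simp only [mem_insert, mem_singleton] at this
    rcases this with rfl | rfl | rfl
    · exact absurd rfl hx.1.ne
    · exact absurd rfl hx.2.ne
    · rfl
  · intro T hT
    simp only [mem_filter, mem_univ, true_and] at hT ⊢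
    obtain ⟨hT, hu, hv⟩ := hT
    have hv' : v ∈ T.erase u := mem_erase.2 ⟨huv.ne.symm, hv⟩
    obtain ⟨x, hx⟩ := card_eq_one.1 <| by
      rw [card_erase_of_mem hv', card_erase_of_mem hu, hT.card_eq]
    obtain ⟨hxv, hxu, hxT⟩ : x ≠ v ∧ x ≠ u ∧ x ∈ T := by
      have : x ∈ (T.erase u).erase v := hx ▸ mem_singleton_self x
      simpa only [mem_erase] using this
    refine ⟨x, ⟨hT.1 hu hxT hxu.symm, hT.1 hv hxT hxv.symm⟩, ?_⟩
    rw [← hx, insert_erase hv', insert_erase hu]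

theorem filter_adj_top_sdiff_eq_compl (u v : V) :
    univ.filter (fun x => (⊤ \ M).Adj u x ∧ (⊤ \ M).Adj v x) =
      (insert u (insert v (M.neighborFinset u ∪ M.neighborFinset v)))ᶜ := by
  ext x
  simp only [mem_filter, mem_univ, true_and, mem_compl, mem_insert, mem_union,
    mem_neighborFinset, sdiff_adj, top_adj]
  tauto

theorem sum_insert_insert_neighborFinset (hM : ∀ v, M.degree v ≤ 1) (huv : u ≠ v)
    (hnM : ¬ M.Adj u v) (φ : V → ℝ) :
    ∑ x ∈ insert u (insert v (M.neighborFinset u ∪ M.neighborFinset v)), φ x =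
      φ u + φ v + ∑ x ∈ M.neighborFinset u, φ x + ∑ x ∈ M.neighborFinset v, φ x := by
  have hnM' : ¬ M.Adj v u := fun h => hnM h.symm
  rw [sum_insert (by simpa [huv] using hnM'), sum_insert (by simpa using hnM),
    sum_union (disjoint_neighborFinset hM huv)]
  ring

theorem sum_filter_adj_top_sdiff (hM : ∀ v, M.degree v ≤ 1) (huv : u ≠ v) (hnM : ¬ M.Adj u v)
    (φ : V → ℝ) :
    ∑ x ∈ univ.filter (fun x => (⊤ \ M).Adj u x ∧ (⊤ \ M).Adj v x), φ x = ∑ x, φ x -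
      (φ u + φ v + ∑ x ∈ M.neighborFinset u, φ x + ∑ x ∈ M.neighborFinset v, φ x) := by
  rw [filter_adj_top_sdiff_eq_compl, ← sum_insert_insert_neighborFinset hM huv hnM,
    eq_sub_iff_add_eq, sum_compl_add_sum]

theorem sum_degree_filter_adj_top_sdiff (hM : ∀ v, M.degree v ≤ 1) (huv : u ≠ v)
    (hnM : ¬ M.Adj u v) :
    ∑ x ∈ univ.filter (fun x => (⊤ \ M).Adj u x ∧ (⊤ \ M).Adj v x), (M.degree x : ℝ) =
      ∑ x, (M.degree x : ℝ) - 2 * (M.degree u + M.degree v) := by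
  have hN (w : V) : ∑ x ∈ M.neighborFinset w, (M.degree x : ℝ) = M.degree w := by
    rw [sum_congr rfl fun x hx => by rw [degree_eq_one_of_adj hM ((mem_neighborFinset ..).1 hx)]]
    simp
  rw [sum_filter_adj_top_sdiff hM huv hnM, hN, hN]
  ring

theorem sum_one_sub_degree_filter_adj_top_sdiff (hM : ∀ v, M.degree v ≤ 1) (huv : u ≠ v)
    (hnM : ¬ M.Adj u v) :
    ∑ x ∈ univ.filter (fun x => (⊤ \ M).Adj u x ∧ (⊤ \ M).Adj v x), (1 - (M.degree x : ℝ)) =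
      ∑ x, (1 - (M.degree x : ℝ)) - (2 - (M.degree u + M.degree v)) := by
  have hN (w : V) : ∑ x ∈ M.neighborFinset w, (1 - (M.degree x : ℝ)) = 0 :=
    sum_eq_zero fun x hx => by rw [degree_eq_one_of_adj hM ((mem_neighborFinset ..).1 hx)]; simp
  rw [sum_filter_adj_top_sdiff hM huv hnM, hN, hN]
  ring

theorem sum_filter_isNClique_top_sdiff (hM : ∀ v, M.degree v ≤ 1) (huv : (⊤ \ M).Adj u v)
    (g : ℕ → ℝ) :
    ∑ T ∈ univ.filter (fun T : Finset V => (⊤ \ M).IsNClique 3 T ∧ u ∈ T ∧ v ∈ T),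
        g (∑ x ∈ T, M.degree x) =
      (∑ x, (M.degree x : ℝ) - 2 * (M.degree u + M.degree v)) *
          g (M.degree u + M.degree v + 1) +
        (∑ x, (1 - (M.degree x : ℝ)) - (2 - (M.degree u + M.degree v))) *
          g (M.degree u + M.degree v) := by
  obtain ⟨huv', hnM⟩ : u ≠ v ∧ ¬ M.Adj u v := by simpa using huv
  have hdeg : ∀ x ∈ univ.filter (fun x => (⊤ \ M).Adj u x ∧ (⊤ \ M).Adj v x),
      ∑ y ∈ {u, v, x}, M.degree y = M.degree u + M.degree v + M.degree x := by
    intro x hx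
    obtain ⟨hux, hvx⟩ : (⊤ \ M).Adj u x ∧ (⊤ \ M).Adj v x := by simpa using hx
    rw [sum_insert (by simp [huv', hux.ne]), sum_insert (by simp [hvx.ne]), sum_singleton,
      add_assoc]
  rw [sum_isNClique_three_mem_eq_sum _ huv, sum_congr rfl fun x hx => congrArg g (hdeg x hx),
    sum_comp_add_of_le_one _ hM, sum_degree_filter_adj_top_sdiff hM huv' hnM,
    sum_one_sub_degree_filter_adj_top_sdiff hM huv' hnM]

theorem exists_isFracTriangleDecomposition_top_sdiff (hV : 7 ≤ Fintype.card V)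
    (hM : ∀ v, M.degree v ≤ 1) : ∃ w, (⊤ \ M).IsFracTriangleDecomposition w := by
  set m := ∑ x, (1 - M.degree x)
  have hm : (m : ℝ) = ∑ x, (1 - (M.degree x : ℝ)) := by
    simp only [m, Nat.cast_sum, Nat.cast_sub (hM _), Nat.cast_one]
  have hcard : (Fintype.card V : ℝ) - m = ∑ x, (M.degree x : ℝ) := by
    simp [hm, sum_sub_distrib]
  have hn : (6 : ℝ) < Fintype.card V := by exact_mod_cast hV
  refine ⟨fun T => if (⊤ \ M).IsNClique 3 T then
    matchingTriangleWeight (Fintype.card V) m (∑ x ∈ T, M.degree x) else 0,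
    isFracTriangleDecomposition_of_nonneg (fun T => ?_) (fun T hT => if_neg hT) fun u v huv => ?_⟩
  · split_ifs
    exacts [matchingTriangleWeight_nonneg hn _ _, le_rfl]
  obtain ⟨huv', hnM⟩ : u ≠ v ∧ ¬ M.Adj u v := by simpa using huv
  have hmt : 2 ≤ m + (M.degree u + M.degree v) := by
    have hX : 0 ≤ (m : ℝ) - (2 - (M.degree u + M.degree v)) := by
      rw [hm, ← sum_one_sub_degree_filter_adj_top_sdiff hM huv' hnM]
      exact sum_nonneg fun x _ => sub_nonneg.2 (Nat.cast_le_one.2 (hM x))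
    exact_mod_cast (by linarith : (2 : ℝ) ≤ m + (M.degree u + M.degree v))
  rw [filter_congr_decidable, sum_congr rfl fun T hT => if_pos (mem_filter.1 hT).2.1,
    sum_filter_isNClique_top_sdiff hM huv, ← hcard, ← hm]
  have ht : M.degree u + M.degree v ≤ 2 := add_le_add (hM u) (hM v)
  have hrec := matchingTriangleWeight_recurrence hn ht hmt
  push_cast at hrec ⊢
  linear_combination hrec

end SimpleGraph

theorem stmt8_general (n : ℕ) (hn : 7 ≤ n) (M : SimpleGraph (Fin n))
    (hmatch : ∀ v : Fin n, M.degree v ≤ 1) :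
    ∃ w, ((⊤ : SimpleGraph (Fin n)) \ M).IsFracTriangleDecomposition w :=
  SimpleGraph.exists_isFracTriangleDecomposition_top_sdiff (by simpa using hn) hmatch

/-- for `n ≥ 7` and `k ≤ ⌊n/2⌋`, `K_n` minus a `k`-edge matching has a
fractional triangle decomposition. -/
theorem stmt8 (n k : ℕ) (hn : 7 ≤ n) (hk : k ≤ n / 2) (M : SimpleGraph (Fin n))
    (hmatch : ∀ v : Fin n, M.degree v ≤ 1) (hcard : M.edgeFinset.card = k) :
    ∃ w, ((⊤ : SimpleGraph (Fin n)) \ M).IsFracTriangleDecomposition w :=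
  stmt8_general n hn M hmatch
end

section
/- There exists a 2-colouring of the edges of the complete graph K_6 in which any two monochromatic triangles share an edge; consequently f(6) = 3, where f(n) is the largest m such that every 2-colouring of the edges of K_n contains a collection of pairwise edge-disjoint monochromatic triangles with a total of m edges. (Such a colouring is obtained by taking one colour class to be a 5-cycle with one vertex replicated.) -/
open Finset
open scoped Classical

variable {V : Type*}

/-- A monochromatic triangle packing for the 2-colouring of `K_n` given by `G` and `Gᶜ`:
pairwise edge-disjoint triangles, each monochromatic. -/
def IsMonoTrianglePacking {V : Type*} [DecidableEq V] (G : SimpleGraph V)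
    (P : Finset (Finset V)) : Prop :=
  (∀ T ∈ P, G.IsNClique 3 T ∨ Gᶜ.IsNClique 3 T) ∧
    (P : Set (Finset V)).Pairwise fun S T => (S ∩ T).card ≤ 1

/-- `f(n)`: the largest `m` such that every 2-colouring of `E(K_n)` has a monochromatic
triangle packing of size `m`, i.e. the minimum over colourings of the maximum packing size. -/
noncomputable def fMono (n : ℕ) : ℕ :=
  sInf {m | ∃ G : SimpleGraph (Fin n),
    m = sSup {k | ∃ P : Finset (Finset (Fin n)), IsMonoTrianglePacking G P ∧ k = 3 * P.card}}


/-!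
Colour the edges of a 5-cycle red, add a copy of one of its vertices with the same red
neighbours, and colour every other edge blue. The red graph is triangle-free, and the only blue
triangles are the two formed by the vertex, its copy and one of the two vertices opposite them
on the pentagon. These share an edge, so a monochromatic packing has at most one triangle.
Conversely, `R(3,3) = 6` gives a monochromatic triangle in every colouring of `K_6`.
-/

namespace SimpleGraph

variable {V : Type*} (G : SimpleGraph V)

abbrev IsMonoTriangle (T : Finset V) : Prop :=
  G.IsNClique 3 T ∨ Gᶜ.IsNClique 3 T

variable {G}

lemma isMonoTriangle_compl {T : Finset V} : Gᶜ.IsMonoTriangle T ↔ G.IsMonoTriangle T := by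
  rw [IsMonoTriangle, compl_compl, or_comm]

lemma exists_isMonoTriangle_of_three_le_degree {v : V}
    [Fintype (G.neighborSet v)] (hv : 3 ≤ G.degree v) : ∃ T : Finset V, G.IsMonoTriangle T := by
  obtain ⟨s, hs, hcard⟩ := Finset.exists_subset_card_eq hv
  obtain ⟨a, b, c, hab, hac, hbc, rfl⟩ := Finset.card_eq_three.mp hcard
  have hva : G.Adj v a := (mem_neighborFinset _ _ _).mp (hs (by simp))
  have hvb : G.Adj v b := (mem_neighborFinset _ _ _).mp (hs (by simp))
  have hvc : G.Adj v c := (mem_neighborFinset _ _ _).mp (hs (by simp))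
  by_cases h_ab : G.Adj a b
  · exact ⟨{v, a, b}, .inl (is3Clique_triple_iff.mpr ⟨hva, hvb, h_ab⟩)⟩
  by_cases h_ac : G.Adj a c
  · exact ⟨{v, a, c}, .inl (is3Clique_triple_iff.mpr ⟨hva, hvc, h_ac⟩)⟩
  by_cases h_bc : G.Adj b c
  · exact ⟨{v, b, c}, .inl (is3Clique_triple_iff.mpr ⟨hvb, hvc, h_bc⟩)⟩
  exact ⟨{a, b, c}, .inr (is3Clique_triple_iff.mpr ⟨⟨hab, h_ab⟩, ⟨hac, h_ac⟩, ⟨hbc, h_bc⟩⟩)⟩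

lemma exists_isMonoTriangle [Fintype V] (hV : 6 ≤ Fintype.card V) :
    ∃ T : Finset V, G.IsMonoTriangle T := by
  obtain ⟨v⟩ : Nonempty V := Fintype.card_pos_iff.mp (by omega)
  have hdeg : Gᶜ.degree v = Fintype.card V - 1 - G.degree v := G.degree_compl v
  rcases le_or_gt 3 (G.degree v) with hv | hv
  · exact exists_isMonoTriangle_of_three_le_degree hv
  · obtain ⟨T, hT⟩ := exists_isMonoTriangle_of_three_le_degree (G := Gᶜ) (v := v) (by omega)
    exact ⟨T, isMonoTriangle_compl.mp hT⟩

variable (G) in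
def monoPackingSizes [DecidableEq V] : Set ℕ :=
  {k | ∃ P : Finset (Finset V), IsMonoTrianglePacking G P ∧ k = 3 * P.card}

variable [DecidableEq V]

lemma bddAbove_monoPackingSizes [Fintype V] : BddAbove G.monoPackingSizes := by
  refine ⟨3 * Fintype.card (Finset V), ?_⟩
  rintro _ ⟨P, -, rfl⟩
  exact Nat.mul_le_mul_left 3 P.card_le_univ

lemma three_mem_monoPackingSizes {T : Finset V} (hT : G.IsMonoTriangle T) :
    3 ∈ G.monoPackingSizes :=
  ⟨{T}, ⟨fun S hS => Finset.mem_singleton.mp hS ▸ hT, by simp⟩, rfl⟩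

lemma three_le_sSup_monoPackingSizes [Fintype V] (hV : 6 ≤ Fintype.card V) :
    3 ≤ sSup G.monoPackingSizes :=
  have ⟨_, hT⟩ := exists_isMonoTriangle (G := G) hV
  le_csSup bddAbove_monoPackingSizes (three_mem_monoPackingSizes hT)

lemma card_le_one_of_isMonoTrianglePacking
    (hG : ∀ T₁ T₂ : Finset V, G.IsMonoTriangle T₁ → G.IsMonoTriangle T₂ →
      T₁ ≠ T₂ → 2 ≤ (T₁ ∩ T₂).card)
    {P : Finset (Finset V)} (hP : IsMonoTrianglePacking G P) : P.card ≤ 1 := by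
  refine Finset.card_le_one.mpr fun S hS T hT => by_contra fun hST => ?_
  have := hP.2 hS hT hST
  have := hG S T (hP.1 S hS) (hP.1 T hT) hST
  omega

lemma sSup_monoPackingSizes_le_three
    (hG : ∀ T₁ T₂ : Finset V, G.IsMonoTriangle T₁ → G.IsMonoTriangle T₂ →
      T₁ ≠ T₂ → 2 ≤ (T₁ ∩ T₂).card) :
    sSup G.monoPackingSizes ≤ 3 := by
  refine csSup_le' ?_
  rintro _ ⟨P, hP, rfl⟩
  have := card_le_one_of_isMonoTrianglePacking hG hP
  omega

end SimpleGraph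

open SimpleGraph

def pentagonWithTwin : SimpleGraph (Fin 6) :=
  (cycleGraph 5).comap fun i => Fin.ofNat 5 i

instance : DecidableRel pentagonWithTwin.Adj :=
  inferInstanceAs (DecidableRel ((cycleGraph 5).comap _).Adj)

set_option maxRecDepth 10000 in
lemma pentagonWithTwin_two_le_card_inter : ∀ T₁ T₂ : Finset (Fin 6),
    pentagonWithTwin.IsMonoTriangle T₁ → pentagonWithTwin.IsMonoTriangle T₂ →
      T₁ ≠ T₂ → 2 ≤ (T₁ ∩ T₂).card := by
  decide

/-- there is a 2-colouring of `K_6` in which any two distinct monochromatic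
triangles share an edge (i.e. at least two vertices); consequently `f(6) = 3`. -/
theorem stmt15 :
    (∃ G : SimpleGraph (Fin 6), ∀ T₁ T₂ : Finset (Fin 6),
      (G.IsNClique 3 T₁ ∨ Gᶜ.IsNClique 3 T₁) → (G.IsNClique 3 T₂ ∨ Gᶜ.IsNClique 3 T₂) →
      T₁ ≠ T₂ → 2 ≤ (T₁ ∩ T₂).card) ∧
    fMono 6 = 3 := by
  refine ⟨⟨pentagonWithTwin, pentagonWithTwin_two_le_card_inter⟩, le_antisymm ?_ ?_⟩
  · calc fMono 6 ≤ sSup pentagonWithTwin.monoPackingSizes := Nat.sInf_le ⟨pentagonWithTwin, rfl⟩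
      _ ≤ 3 := sSup_monoPackingSizes_le_three pentagonWithTwin_two_le_card_inter
  · refine le_csInf ⟨_, pentagonWithTwin, rfl⟩ ?_
    rintro _ ⟨G, rfl⟩
    exact three_le_sSup_monoPackingSizes (by simp)
end
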